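/- arXiv:2405.01314 — 3 statements merged into one kernel-verified Lean document; each statement's English description precedes it below -/
import Mathlib

section
/- KKT optimality of the lower-bounded water-filling solution: let n ≥ 1, wᵢ > 0 and cᵢ ≥ 0 for i = 1, …, n, and B > 0 with ∑ᵢ cᵢ ≤ B. Suppose λ > 0 satisfies ∑_{i=1}^n max(cᵢ, 1/λ − 1/wᵢ) = B. Then β*ᵢ := max(cᵢ, 1/λ − 1/wᵢ) maximizes ∑_{i=1}^n log(1 + wᵢ βᵢ) over all β ∈ ℝⁿ with βᵢ ≥ cᵢ for all i and ∑ᵢ βᵢ ≤ B. -/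
theorem waterfilling_kkt_optimal (n : ℕ) (hn : 1 ≤ n)
    (w c : Fin n → ℝ) (B lam : ℝ)
    (hw : ∀ i, 0 < w i) (hc : ∀ i, 0 ≤ c i) (hB : 0 < B)
    (hfeas : ∑ i, c i ≤ B) (hlam : 0 < lam)
    (hlevel : ∑ i, max (c i) (1 / lam - 1 / w i) = B) :
    ∀ β : Fin n → ℝ, (∀ i, c i ≤ β i) → ∑ i, β i ≤ B →
      ∑ i, Real.log (1 + w i * β i) ≤
        ∑ i, Real.log (1 + w i * max (c i) (1 / lam - 1 / w i)) := by
  intro β hβc hβB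
  set s : Fin n → ℝ := fun i => max (c i) (1 / lam - 1 / w i) with hs
  have hs_nonneg : ∀ i, 0 ≤ s i := fun i => le_trans (hc i) (le_max_left _ _)
  have hb_pos : ∀ i, 0 < 1 + w i * s i := fun i => by
    have := mul_nonneg (hw i).le (hs_nonneg i); linarith
  have ha_pos : ∀ i, 0 < 1 + w i * β i := fun i => by
    have := mul_nonneg (hw i).le (le_trans (hc i) (hβc i)); linarith
  have key : ∀ i, Real.log (1 + w i * β i) ≤
      Real.log (1 + w i * s i) + lam * (β i - s i) := by
    intro i
    have hlog : Real.log (1 + w i * β i) - Real.log (1 + w i * s i) ≤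
        (1 + w i * β i) / (1 + w i * s i) - 1 := by
      rw [← Real.log_div (ha_pos i).ne' (hb_pos i).ne']
      exact Real.log_le_sub_one_of_pos (div_pos (ha_pos i) (hb_pos i))
    have hdiv : (1 + w i * β i) / (1 + w i * s i) - 1
        = w i / (1 + w i * s i) * (β i - s i) := by
      rw [div_sub_one (hb_pos i).ne', div_mul_eq_mul_div]
      congr 1; ring
    have hgrad : w i / (1 + w i * s i) * (β i - s i) ≤ lam * (β i - s i) := by
      rcases le_total (c i) (1 / lam - 1 / w i) with h | h
      · have hsi : s i = 1 / lam - 1 / w i := max_eq_right h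
        have hb : 1 + w i * s i = w i / lam := by
          rw [hsi, mul_sub, mul_one_div, mul_one_div, div_self (hw i).ne']
          ring
        have hlamq : w i / (1 + w i * s i) = lam := by
          rw [hb, div_div_eq_mul_div, mul_comm, mul_div_assoc,
            div_self (hw i).ne', mul_one]
        rw [hlamq]
      · have hsi : s i = c i := max_eq_left h
        have h1 : w i / lam ≤ 1 + w i * c i := by
          have := mul_le_mul_of_nonneg_left h (hw i).le
          have hw' := (hw i).ne'
          have : w i * (1/lam) - w i * (1/w i) ≤ w i * c i := by
            nlinarith
          rw [mul_one_div, mul_one_div, div_self hw'] at this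
          linarith
        have hb' : 0 < 1 + w i * c i := hsi ▸ hb_pos i
        have h2 : w i ≤ (1 + w i * c i) * lam := (div_le_iff₀ hlam).mp h1
        have hgle : w i / (1 + w i * s i) ≤ lam := by
          rw [hsi, div_le_iff₀ hb']
          linarith
        have hge : 0 ≤ β i - s i := by rw [hsi]; linarith [hβc i]
        exact mul_le_mul_of_nonneg_right hgle hge
    linarith
  calc ∑ i, Real.log (1 + w i * β i)
      ≤ ∑ i, (Real.log (1 + w i * s i) + lam * (β i - s i)) :=
        Finset.sum_le_sum (fun i _ => key i)
    _ = ∑ i, Real.log (1 + w i * s i) + lam * (∑ i, β i - ∑ i, s i) := by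
        rw [Finset.sum_add_distrib, ← Finset.mul_sum, Finset.sum_sub_distrib]
    _ ≤ ∑ i, Real.log (1 + w i * s i) := by
        have : ∑ i, s i = B := hlevel
        have : ∑ i, β i - ∑ i, s i ≤ 0 := by rw [this]; linarith
        nlinarith [mul_nonpos_of_nonneg_of_nonpos hlam.le this]
end

section
/- Existence and uniqueness of the water level: under the hypotheses wᵢ > 0, cᵢ ≥ 0, and ∑ᵢ cᵢ < B, there exists λ > 0 such that ∑_{i=1}^n max(cᵢ, 1/λ − 1/wᵢ) = B; moreover any two such λ with at least one index i satisfying 1/λ − 1/wᵢ > cᵢ coincide. -/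
theorem water_level_exists_unique (n : ℕ) (hn : 1 ≤ n) (w c : Fin n → ℝ) (B : ℝ)
    (hw : ∀ i, 0 < w i) (hc : ∀ i, 0 ≤ c i) (hB : ∑ i, c i < B) :
    (∃ lam : ℝ, 0 < lam ∧ ∑ i, max (c i) (1 / lam - 1 / w i) = B) ∧
      ∀ lam₁ lam₂ : ℝ, 0 < lam₁ → 0 < lam₂ →
        (∑ i, max (c i) (1 / lam₁ - 1 / w i) = B) →
        (∑ i, max (c i) (1 / lam₂ - 1 / w i) = B) →
        (∃ i, c i < 1 / lam₁ - 1 / w i) → (∃ i, c i < 1 / lam₂ - 1 / w i) →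
        lam₁ = lam₂ := by
  have hwinv : ∀ i, 0 < 1 / w i := fun i => one_div_pos.mpr (hw i)
  set g : ℝ → ℝ := fun t => ∑ i, max (c i) (t - 1 / w i) with hgdef
  have hcont : Continuous g := by
    apply continuous_finset_sum
    intro i _
    exact continuous_const.max (continuous_id.sub continuous_const)
  have hg0 : g 0 = ∑ i, c i := by
    apply Finset.sum_congr rfl
    intro i _
    rw [max_eq_left]
    have := (hwinv i).le
    have := hc i
    linarith
  have hstrict : ∀ t₁ t₂ : ℝ, t₁ < t₂ → (∃ i, c i < t₁ - 1 / w i) → g t₁ < g t₂ := by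
    rintro t₁ t₂ hlt ⟨i, hi⟩
    apply Finset.sum_lt_sum
    · intro j _
      exact max_le_max le_rfl (by linarith)
    · refine ⟨i, Finset.mem_univ i, ?_⟩
      rw [max_eq_right hi.le]
      calc t₁ - 1 / w i < t₂ - 1 / w i := by linarith
        _ ≤ max (c i) (t₂ - 1 / w i) := le_max_right _ _
  have hsw : 0 ≤ ∑ i, 1 / w i := Finset.sum_nonneg fun i _ => (hwinv i).le
  set T : ℝ := |B| + ∑ i, 1 / w i + 1 with hTdef
  clear_value T
  have hT0 : (0 : ℝ) ≤ T := by
    have := abs_nonneg B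
    rw [hTdef]; linarith
  have hgT : B ≤ g T := by
    have h1 : ∑ i, (T - 1 / w i) ≤ g T :=
      Finset.sum_le_sum fun i _ => le_max_right _ _
    have h2 : ∑ i, (T - 1 / w i) = n * T - ∑ i, 1 / w i := by
      rw [Finset.sum_sub_distrib, Finset.sum_const, Finset.card_univ, Fintype.card_fin,
        nsmul_eq_mul]
    have hn1 : (1 : ℝ) ≤ n := by exact_mod_cast hn
    have hb : B ≤ |B| := le_abs_self B
    have hnT : T ≤ (n : ℝ) * T := le_mul_of_one_le_left hT0 hn1
    linarith
  have hmem : B ∈ Set.Icc (g 0) (g T) := ⟨by rw [hg0]; exact hB.le, hgT⟩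
  obtain ⟨t, ht, hgt⟩ := intermediate_value_Icc hT0 hcont.continuousOn hmem
  have ht0 : 0 < t := by
    rcases ht.1.lt_or_eq with h | h
    · exact h
    · exfalso
      rw [← h, hg0] at hgt
      linarith
  constructor
  · refine ⟨1 / t, by positivity, ?_⟩
    rw [one_div_one_div]
    exact hgt
  · intro l₁ l₂ h₁ h₂ hs₁ hs₂ he₁ he₂
    have e₁ : g (1 / l₁) = B := hs₁
    have e₂ : g (1 / l₂) = B := hs₂
    rcases lt_trichotomy (1 / l₁) (1 / l₂) with h | h | h
    · have := hstrict _ _ h he₁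
      rw [e₁, e₂] at this
      exact absurd this (lt_irrefl B)
    · have := congrArg (fun x => 1 / x) h
      simpa [one_div_one_div] using this
    · have := hstrict _ _ h he₂
      rw [e₁, e₂] at this
      exact absurd this (lt_irrefl B)
end

section
/- KKT optimality of the power-control solution: let n ≥ 1 and for each i let τᵢ > 0, ωᵢ > 0, βᵢ > 0, ζᵢ ≥ 0, and P > 0 with ∑ᵢ βᵢ ζᵢ ≤ P. Suppose λ > 0 satisfies ∑_{i=1}^n βᵢ · max(ζᵢ, τᵢ/(βᵢ λ) − 1/ωᵢ) = P. Then ρ*ᵢ := max(ζᵢ, τᵢ/(βᵢ λ) − 1/ωᵢ) maximizes ∑_{i=1}^n τᵢ · log(1 + ωᵢ ρᵢ) over all ρ ∈ ℝⁿ with ρᵢ ≥ ζᵢ for all i and ∑ᵢ βᵢ ρᵢ ≤ P. -/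
theorem power_control_kkt_optimal (n : ℕ) (hn : 1 ≤ n)
    (τ ω β ζ : Fin n → ℝ) (P lam : ℝ)
    (hτ : ∀ i, 0 < τ i) (hω : ∀ i, 0 < ω i) (hβ : ∀ i, 0 < β i) (hζ : ∀ i, 0 ≤ ζ i)
    (hP : 0 < P) (hfeas : ∑ i, β i * ζ i ≤ P) (hlam : 0 < lam)
    (hlevel : ∑ i, β i * max (ζ i) (τ i / (β i * lam) - 1 / ω i) = P) :
    ∀ ρ : Fin n → ℝ, (∀ i, ζ i ≤ ρ i) → ∑ i, β i * ρ i ≤ P →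
      ∑ i, τ i * Real.log (1 + ω i * ρ i) ≤
        ∑ i, τ i * Real.log (1 + ω i * max (ζ i) (τ i / (β i * lam) - 1 / ω i)) := by
  intro ρ hρ hsum
  set s : Fin n → ℝ := fun i => max (ζ i) (τ i / (β i * lam) - 1 / ω i) with hs
  show ∑ i, τ i * Real.log (1 + ω i * ρ i) ≤ ∑ i, τ i * Real.log (1 + ω i * s i)
  have hlevel' : ∑ i, β i * s i = P := hlevel
  have hsnn : ∀ i, 0 ≤ s i := fun i => le_trans (hζ i) (le_max_left _ _)
  have hA : ∀ i, 0 < 1 + ω i * s i := fun i => by nlinarith [hω i, hsnn i]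
  have hkey : ∀ i, τ i * Real.log (1 + ω i * ρ i) - τ i * Real.log (1 + ω i * s i)
      ≤ lam * (β i * ρ i) - lam * (β i * s i) := by
    intro i
    have hAi := hA i
    have hωi := hω i
    have hτi := hτ i
    have hbl : 0 < β i * lam := mul_pos (hβ i) hlam
    have hρpos : 0 < 1 + ω i * ρ i := by nlinarith [hρ i, hζ i]
    -- log linearization
    have hlog : Real.log (1 + ω i * ρ i) - Real.log (1 + ω i * s i)
        ≤ ω i * (ρ i - s i) / (1 + ω i * s i) := by
      have h1 : Real.log ((1 + ω i * ρ i) / (1 + ω i * s i))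
          ≤ (1 + ω i * ρ i) / (1 + ω i * s i) - 1 :=
        Real.log_le_sub_one_of_pos (by positivity)
      rw [Real.log_div (ne_of_gt hρpos) (ne_of_gt hAi)] at h1
      have h2 : (1 + ω i * ρ i) / (1 + ω i * s i) - 1
          = ω i * (ρ i - s i) / (1 + ω i * s i) := by
        field_simp; ring
      linarith [h2 ▸ h1]
    -- gradient bound: β λ A ≥ τ ω, with equality if ρ i < s i
    have hgrad : 0 ≤ (β i * lam * (1 + ω i * s i) - τ i * ω i) * (ρ i - s i) := by
      rcases le_or_gt (s i) (ρ i) with h | h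
      · have hsge : τ i / (β i * lam) - 1 / ω i ≤ s i := le_max_right _ _
        have : τ i * ω i ≤ β i * lam * (1 + ω i * s i) := by
          have h3 : (τ i / (β i * lam) - 1 / ω i) * (β i * lam) * ω i
              = τ i * ω i - β i * lam := by field_simp [(hβ i).ne']
          nlinarith [mul_le_mul_of_nonneg_right
            (mul_le_mul_of_nonneg_right hsge hbl.le) hωi.le]
        nlinarith
      · have hval : s i = τ i / (β i * lam) - 1 / ω i := by
          rcases max_cases (ζ i) (τ i / (β i * lam) - 1 / ω i) with ⟨h1, _⟩ | ⟨h1, _⟩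
          · exfalso
            have : s i = ζ i := h1
            linarith [hρ i]
          · exact h1
        have : β i * lam * (1 + ω i * s i) = τ i * ω i := by
          rw [hval]; field_simp [(hβ i).ne']; ring
        rw [this]; simp
    have hstep : τ i * (ω i * (ρ i - s i) / (1 + ω i * s i)) ≤ lam * (β i * (ρ i - s i)) := by
      have heq : τ i * (ω i * (ρ i - s i) / (1 + ω i * s i))
          = τ i * ω i * (ρ i - s i) / (1 + ω i * s i) := by ring
      rw [heq, div_le_iff₀ hAi]
      nlinarith
    calc τ i * Real.log (1 + ω i * ρ i) - τ i * Real.log (1 + ω i * s i)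
        = τ i * (Real.log (1 + ω i * ρ i) - Real.log (1 + ω i * s i)) := by ring
      _ ≤ τ i * (ω i * (ρ i - s i) / (1 + ω i * s i)) :=
          mul_le_mul_of_nonneg_left hlog hτi.le
      _ ≤ lam * (β i * (ρ i - s i)) := hstep
      _ = lam * (β i * ρ i) - lam * (β i * s i) := by ring
  have hsumkey : ∑ i, (τ i * Real.log (1 + ω i * ρ i) - τ i * Real.log (1 + ω i * s i))
      ≤ ∑ i, (lam * (β i * ρ i) - lam * (β i * s i)) :=
    Finset.sum_le_sum fun i _ => hkey i
  rw [Finset.sum_sub_distrib, Finset.sum_sub_distrib] at hsumkey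
  have h5 : ∑ i, lam * (β i * s i) = lam * P := by
    rw [← Finset.mul_sum, hlevel']
  have h6 : ∑ i, lam * (β i * ρ i) ≤ lam * P := by
    rw [← Finset.mul_sum]
    exact mul_le_mul_of_nonneg_left hsum hlam.le
  linarith
end
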